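/- Let d ≥ 1 and M > 0, and let Φ : ℂ^d → ℝ be a C² function (of the 2d real variables) all of whose second-order partial derivatives are bounded in absolute value by M on all of ℂ^d. For x = u+iv, define the holomorphic gradient (∂_x Φ)_j = ½(∂_{u_j} − i∂_{v_j})Φ. Then there exists a constant C > 0 depending only on d such that for every t₀ > 0 and all x, y ∈ ℂ^d, setting θ = (2/i)(∂_x Φ)((x+y)/2) + i·t₀·conj(x−y) ∈ ℂ^d, one has −Φ(x) + Re(i⟨x−y, θ⟩) + Φ(y) ≤ (C·M − t₀)·|x−y|². In particular, for t₀ > C·M the left-hand side is bounded above by a negative multiple of |x−y|². -/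

import Mathlib

open Matrix

noncomputable section

/-- The `j`-th component of the holomorphic gradient
`(∂_x Φ)_j = ½(∂_{u_j} - i ∂_{v_j})Φ` of a real-valued function `Φ` on `ℂ^d`,
computed via directional derivatives along the real and imaginary coordinate
directions. -/
def holGrad {d : ℕ} (Φ : (Fin d → ℂ) → ℝ) (x : Fin d → ℂ) (j : Fin d) : ℂ :=
  (1 / 2) *
    (((deriv (fun s : ℝ => Φ (x + (s : ℂ) • (Pi.single j (1 : ℂ) : Fin d → ℂ))) 0 : ℝ) : ℂ)
      - Complex.I *
        ((deriv (fun s : ℝ => Φ (x + (s : ℂ) • (Pi.single j Complex.I : Fin d → ℂ))) 0 : ℝ)))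

/-- The contour covector `θ = (2/i)(∂_x Φ)((x+y)/2) + i t₀ conj(x - y)`. -/
def theta15 {d : ℕ} (Φ : (Fin d → ℂ) → ℝ) (t₀ : ℝ) (x y : Fin d → ℂ) (j : Fin d) : ℂ :=
  (2 / Complex.I) * holGrad Φ ((2⁻¹ : ℂ) • (x + y)) j +
    Complex.I * (t₀ : ℂ) * (starRingEnd ℂ) ((x - y) j)

/-!
Write `z = x - y` and `m` for the midpoint of `x` and `y`. By the choice of `θ`,
`Re(i⟨z, θ⟩) = DΦ(m) z - t₀ |z|²`: the `(2/i)(∂_x Φ)` part reconstitutes the real derivative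
along `z`, and the `i t₀ conj z` part contributes `-t₀ |z|²`. It remains to bound
`-Φ(x) + DΦ(m)(x - y) + Φ(y)`, which is the difference of the first-order Taylor remainders of
`Φ` at `m` evaluated at `y` and at `x`; both are `O(‖D²Φ‖ |z|²)`, and the coordinate bounds on
the second partials give `‖D²Φ‖ ≤ 4 d² M`.
-/

section BasisBounds

variable {ι E F : Type*} [Fintype ι] [NormedAddCommGroup E] [NormedSpace ℝ E]
  [NormedAddCommGroup F] [NormedSpace ℝ F]

theorem ContinuousLinearMap.opNorm_le_card_mul_of_basis (b : Module.Basis ι ℝ E)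
    (hb : ∀ v i, |b.repr v i| ≤ ‖v‖) (L : E →L[ℝ] F) {M : ℝ} (hM : 0 ≤ M)
    (hL : ∀ i, ‖L (b i)‖ ≤ M) : ‖L‖ ≤ Fintype.card ι * M := by
  refine L.opNorm_le_bound (by positivity) fun v => ?_
  calc ‖L v‖ = ‖∑ i, b.repr v i • L (b i)‖ := by
        conv_lhs => rw [← b.sum_repr v]
        simp only [map_sum, map_smul]
    _ ≤ ∑ i, |b.repr v i| * ‖L (b i)‖ := by
        refine (norm_sum_le _ _).trans_eq (Finset.sum_congr rfl fun i _ => ?_)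
        rw [norm_smul, Real.norm_eq_abs]
    _ ≤ ∑ _i : ι, ‖v‖ * M :=
        Finset.sum_le_sum fun i _ => mul_le_mul (hb v i) (hL i) (norm_nonneg _) (norm_nonneg v)
    _ = Fintype.card ι * M * ‖v‖ := by
        simp only [Finset.sum_const, Finset.card_univ, nsmul_eq_mul]
        ring

theorem ContinuousLinearMap.opNorm_le_card_sq_mul_of_basis (b : Module.Basis ι ℝ E)
    (hb : ∀ v i, |b.repr v i| ≤ ‖v‖) (T : E →L[ℝ] E →L[ℝ] F) {M : ℝ} (hM : 0 ≤ M)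
    (hT : ∀ i k, ‖T (b i) (b k)‖ ≤ M) : ‖T‖ ≤ Fintype.card ι ^ 2 * M := by
  have hrow : ∀ i, ‖T (b i)‖ ≤ Fintype.card ι * M := fun i =>
    (T (b i)).opNorm_le_card_mul_of_basis b hb hM (hT i)
  calc ‖T‖ ≤ Fintype.card ι * (Fintype.card ι * M) :=
        T.opNorm_le_card_mul_of_basis b hb (by positivity) hrow
    _ = Fintype.card ι ^ 2 * M := by ring

end BasisBounds

section Taylor

variable {E : Type*} [NormedAddCommGroup E] [NormedSpace ℝ E] {f : E → ℝ} {K : ℝ}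

theorem abs_sub_sub_fderiv_le_of_norm_fderiv_fderiv_le (hf : ContDiff ℝ 2 f)
    (hK : ∀ w, ‖fderiv ℝ (fderiv ℝ f) w‖ ≤ K) (m p : E) :
    |f p - f m - fderiv ℝ f m (p - m)| ≤ K * ‖p - m‖ ^ 2 := by
  have hK0 : 0 ≤ K := (norm_nonneg (fderiv ℝ (fderiv ℝ f) 0)).trans (hK 0)
  have hdf : Differentiable ℝ (fderiv ℝ f) :=
    (hf.fderiv_right (m := 1) le_rfl).differentiable one_ne_zero
  have hlip : ∀ w, ‖fderiv ℝ f w - fderiv ℝ f m‖ ≤ K * ‖w - m‖ := fun w =>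
    convex_univ.norm_image_sub_le_of_norm_fderiv_le (fun v _ => hdf v) (fun v _ => hK v)
      (Set.mem_univ m) (Set.mem_univ w)
  have hp : p ∈ Metric.closedBall m ‖p - m‖ := by simp [dist_eq_norm]
  have h := (convex_closedBall m ‖p - m‖).norm_image_sub_le_of_norm_fderiv_le'
    (fun w _ => (hf.differentiable two_ne_zero) w)
    (fun w hw => (hlip w).trans (mul_le_mul_of_nonneg_left (mem_closedBall_iff_norm.mp hw) hK0))
    (Metric.mem_closedBall_self (norm_nonneg _)) hp
  rw [← Real.norm_eq_abs]
  linarith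

theorem neg_add_fderiv_midpoint_add_le (hf : ContDiff ℝ 2 f)
    (hK : ∀ w, ‖fderiv ℝ (fderiv ℝ f) w‖ ≤ K) (x y : E) :
    -f x + fderiv ℝ f (midpoint ℝ x y) (x - y) + f y ≤ K / 2 * ‖x - y‖ ^ 2 := by
  set m := midpoint ℝ x y
  have hx := abs_sub_sub_fderiv_le_of_norm_fderiv_fderiv_le hf hK m x
  have hy := abs_sub_sub_fderiv_le_of_norm_fderiv_fderiv_le hf hK m y
  have hxm : x - m = (2⁻¹ : ℝ) • (x - y) := by rw [left_sub_midpoint, invOf_eq_inv]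
  have hym : y - m = -((2⁻¹ : ℝ) • (x - y)) := by
    rw [← smul_neg, neg_sub, right_sub_midpoint, invOf_eq_inv]
  have hnorm : ‖(2⁻¹ : ℝ) • (x - y)‖ = 2⁻¹ * ‖x - y‖ := by rw [norm_smul]; norm_num
  rw [hxm, hnorm] at hx
  rw [hym, norm_neg, hnorm, map_neg] at hy
  rw [map_smul, smul_eq_mul] at hx hy
  linarith [abs_le.mp hx, abs_le.mp hy]

end Taylor

section ComplexCoordinates

open Complex

variable {d : ℕ}

abbrev realBasis (d : ℕ) : Module.Basis (Σ _ : Fin d, Fin 2) ℝ (Fin d → ℂ) :=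
  Pi.basis fun _ => basisOneI

theorem exists_realBasis_eq (k : Σ _ : Fin d, Fin 2) :
    ∃ j : Fin d, realBasis d k = Pi.single j 1 ∨ realBasis d k = Pi.single j I := by
  obtain ⟨j, i⟩ := k
  refine ⟨j, ?_⟩
  fin_cases i <;> simp

theorem abs_realBasis_repr_le (z : Fin d → ℂ) (k : Σ _ : Fin d, Fin 2) :
    |(realBasis d).repr z k| ≤ ‖z‖ := by
  obtain ⟨j, i⟩ := k
  refine le_trans ?_ (norm_le_pi_norm z j)
  fin_cases i
  · simpa using abs_re_le_norm (z j)
  · simpa using abs_im_le_norm (z j)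

theorem card_realBasis_index : Fintype.card (Σ _ : Fin d, Fin 2) = 2 * d := by
  simp [mul_comm]

theorem ContinuousLinearMap.apply_eq_sum_re_im (φ : (Fin d → ℂ) →L[ℝ] ℝ) (z : Fin d → ℂ) :
    φ z = ∑ j, ((z j).re * φ (Pi.single j 1) + (z j).im * φ (Pi.single j I)) := by
  conv_lhs => rw [← (realBasis d).sum_repr z]
  simp [Fintype.sum_sigma, Fin.sum_univ_two]

theorem sq_norm_le_sum_sq_norm (z : Fin d → ℂ) : ‖z‖ ^ 2 ≤ ∑ j, ‖z j‖ ^ 2 := by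
  have hS : 0 ≤ ∑ j, ‖z j‖ ^ 2 := by positivity
  rw [← Real.le_sqrt (norm_nonneg z) hS]
  refine (pi_norm_le_iff_of_nonneg (Real.sqrt_nonneg _)).mpr fun j => ?_
  rw [Real.le_sqrt (norm_nonneg _) hS]
  exact Finset.single_le_sum (f := fun j => ‖z j‖ ^ 2) (fun _ _ => by positivity)
    (Finset.mem_univ j)

theorem norm_fderiv_fderiv_le {Φ : (Fin d → ℂ) → ℝ} {M : ℝ} (hM : 0 ≤ M)
    (hΦ : ∀ w k l, |iteratedFDeriv ℝ 2 Φ w ![realBasis d k, realBasis d l]| ≤ M)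
    (w : Fin d → ℂ) : ‖fderiv ℝ (fderiv ℝ Φ) w‖ ≤ 4 * d ^ 2 * M := by
  have h := (fderiv ℝ (fderiv ℝ Φ) w).opNorm_le_card_sq_mul_of_basis (realBasis d)
    abs_realBasis_repr_le hM fun k l => by
      simpa [iteratedFDeriv_two_apply] using hΦ w k l
  rw [card_realBasis_index] at h
  push_cast at h
  linarith

theorem holGrad_eq {Φ : (Fin d → ℂ) → ℝ} (hΦ : Differentiable ℝ Φ) (x : Fin d → ℂ) (j : Fin d) :
    holGrad Φ x j =
      1 / 2 * (fderiv ℝ Φ x (Pi.single j 1) - I * fderiv ℝ Φ x (Pi.single j I)) := by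
  simp only [holGrad, Complex.coe_smul]
  rw [← lineDeriv, ← lineDeriv, (hΦ x).lineDeriv_eq_fderiv, (hΦ x).lineDeriv_eq_fderiv]

theorem re_I_mul_dotProduct_theta15 {Φ : (Fin d → ℂ) → ℝ} (hΦ : Differentiable ℝ Φ) (t₀ : ℝ)
    (x y : Fin d → ℂ) :
    (I * ((x - y) ⬝ᵥ theta15 Φ t₀ x y)).re =
      fderiv ℝ Φ (midpoint ℝ x y) (x - y) - t₀ * ∑ j, ‖(x - y) j‖ ^ 2 := by
  have hm : (2⁻¹ : ℂ) • (x + y) = midpoint ℝ x y := by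
    rw [midpoint_eq_smul_add, invOf_eq_inv, ← Complex.coe_smul]; norm_num
  have hcoord : ∀ (z : ℂ) (A B : ℝ),
      (I * (z * (2 / I * (1 / 2 * (A - I * B)) + I * t₀ * (starRingEnd ℂ) z))).re =
        z.re * A + z.im * B - t₀ * ‖z‖ ^ 2 := by
    intro z A B
    rw [Complex.sq_norm, Complex.normSq_apply]
    simp
    ring
  rw [dotProduct, Finset.mul_sum, Complex.re_sum]
  simp only [theta15, hm, holGrad_eq hΦ, hcoord]
  rw [Finset.sum_sub_distrib, ← Finset.mul_sum, (fderiv ℝ Φ (midpoint ℝ x y)).apply_eq_sum_re_im]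

end ComplexCoordinates

/-- Phase estimate for the shifted FBI contour: there is `C > 0`,
depending only on `d`, such that for every `C²` function `Φ : ℂ^d → ℝ` whose
second-order partial derivatives (in the `2d` real variables) are bounded by `M`, every
`t₀ > 0` and all `x, y ∈ ℂ^d`, with `θ = (2/i)(∂_x Φ)((x+y)/2) + i t₀ conj(x-y)`, one has
`-Φ(x) + Re(i⟨x - y, θ⟩) + Φ(y) ≤ (C M - t₀)|x - y|²`. -/
theorem statement15 (d : ℕ) (hd : 1 ≤ d) :
    ∃ C : ℝ, 0 < C ∧
      ∀ (M : ℝ) (Φ : (Fin d → ℂ) → ℝ),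
        ContDiff ℝ 2 Φ →
        (∀ (x : Fin d → ℂ) (u v : Fin d → ℂ),
          (∃ j : Fin d, u = (Pi.single j (1 : ℂ) : Fin d → ℂ) ∨
              u = (Pi.single j Complex.I : Fin d → ℂ)) →
          (∃ j : Fin d, v = (Pi.single j (1 : ℂ) : Fin d → ℂ) ∨
              v = (Pi.single j Complex.I : Fin d → ℂ)) →
          |iteratedFDeriv ℝ 2 Φ x ![u, v]| ≤ M) →
        ∀ t₀ : ℝ, 0 < t₀ → ∀ x y : Fin d → ℂ,
          -Φ x + (Complex.I * ((x - y) ⬝ᵥ theta15 Φ t₀ x y)).re + Φ y ≤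
            (C * M - t₀) * ∑ j, ‖(x - y) j‖ ^ 2 := by
  refine ⟨2 * d ^ 2, by positivity, fun M Φ hΦ hbound t₀ _ x y => ?_⟩
  have hM : 0 ≤ M :=
    (abs_nonneg _).trans (hbound x _ _ ⟨⟨0, hd⟩, .inl rfl⟩ ⟨⟨0, hd⟩, .inl rfl⟩)
  have hK : ∀ w, ‖fderiv ℝ (fderiv ℝ Φ) w‖ ≤ 4 * d ^ 2 * M := norm_fderiv_fderiv_le hM
    fun w k l => hbound w _ _ (exists_realBasis_eq k) (exists_realBasis_eq l)
  have htaylor := neg_add_fderiv_midpoint_add_le hΦ hK x y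
  have hnorm : 4 * d ^ 2 * M / 2 * ‖x - y‖ ^ 2 ≤ 2 * d ^ 2 * M * ∑ j, ‖(x - y) j‖ ^ 2 := by
    rw [show (4 * d ^ 2 * M / 2 : ℝ) = 2 * d ^ 2 * M by ring]
    exact mul_le_mul_of_nonneg_left (sq_norm_le_sum_sq_norm _) (by positivity)
  rw [re_I_mul_dotProduct_theta15 (hΦ.differentiable two_ne_zero)]
  linarith
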